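/- [Soundness of the database-level verification algorithm (Theorem 3)] Assume V is nonempty. Let R₁, ..., R_k be relations over finite variable sets X₁, ..., X_k (the relations of the concepts and previously instantiated tuple sets along the protocol path leading to the conflicting query), let v ⊆ X₁ ∪ ⋯ ∪ X_k (the set of previously instantiated variables of the conflicting query together with its RestrictSet), and let 𝒞 be a set of predicates on tuples over v (the relevant branch conditions, which must all hold for the conflicting query to be reached). Define δ = σ_{t ↦ ∀ P ∈ 𝒞, P t}( π_v(R₁ ⋈ ⋯ ⋈ R_k) ). If δ = ∅, then the ontological conflict is spurious: there is no valuation f : ι → V such that f|Xⱼ ∈ Rⱼ for every j and P (f|v) holds for every P ∈ 𝒞, i.e., no correct instantiation of the variables reaches the conflicting query from the start state of the protocol. -/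

import Mathlib

/-- A tuple over a finite variable set `X` assigns a value to each variable in `X`. -/
def Tuple (V : Type*) {ι : Type*} (X : Finset ι) : Type _ := ↥X → V

/-- Restriction of a tuple over `X` to a subset `Y ⊆ X`. -/
def Tuple.restrict {ι V : Type*} {X Y : Finset ι} (h : Y ⊆ X) (t : Tuple V X) :
    Tuple V Y :=
  fun y => t ⟨y.1, h y.2⟩

/-- Restriction of a valuation `f : ι → V` to a tuple over `X`. -/
def restrictVal {ι V : Type*} (X : Finset ι) (f : ι → V) : Tuple V X :=
  fun x => f x.1

/-- The cylinder of a relation `R` over `X`: the set of valuations whose restriction to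
`X` lies in `R`. -/
def Cyl {ι V : Type*} {X : Finset ι} (R : Set (Tuple V X)) : Set (ι → V) :=
  {f | restrictVal X f ∈ R}

/-- The natural join of a relation over `X₁` with a relation over `X₂`: the relation
over `X₁ ∪ X₂` consisting of the tuples whose restriction to `X₁` lies in `R₁` and
whose restriction to `X₂` lies in `R₂`. -/
def natJoin {ι V : Type*} [DecidableEq ι] {X₁ X₂ : Finset ι} (R₁ : Set (Tuple V X₁))
    (R₂ : Set (Tuple V X₂)) : Set (Tuple V (X₁ ∪ X₂)) :=
  {t | t.restrict Finset.subset_union_left ∈ R₁ ∧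
       t.restrict Finset.subset_union_right ∈ R₂}

/-- The projection of a relation `R` over `X` to a subset `Y ⊆ X`: the set of
restrictions to `Y` of the tuples of `R`. -/
def proj {ι V : Type*} {X : Finset ι} (Y : Finset ι) (h : Y ⊆ X)
    (R : Set (Tuple V X)) : Set (Tuple V Y) :=
  {u | ∃ t ∈ R, t.restrict h = u}

/-- The selection of a relation `R` over `X` by a predicate `P` on tuples over `X`. -/
def sel {ι V : Type*} {X : Finset ι} (P : Tuple V X → Prop) (R : Set (Tuple V X)) :
    Set (Tuple V X) :=
  {t ∈ R | P t}

/-- A relation together with its variable set. -/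
structure DBRel (ι V : Type*) where
  X : Finset ι
  R : Set (Tuple V X)

/-- Binary natural join of bundled relations. -/
def DBRel.join {ι V : Type*} [DecidableEq ι] (A B : DBRel ι V) : DBRel ι V :=
  ⟨A.X ∪ B.X, natJoin A.R B.R⟩

/-- The iterated (left-nested) binary natural join `((R₁ ⋈ R₂) ⋈ ⋯) ⋈ R_k` of the
relations `R₁ :: [R₂, ..., R_k]`. -/
def multiJoin {ι V : Type*} [DecidableEq ι] (A : DBRel ι V) (l : List (DBRel ι V)) :
    DBRel ι V :=
  l.foldl DBRel.join A

/-! A correct instantiation `f` lies in the cylinder of every relation on the path, hence in the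
cylinder of their join, since the cylinder of a natural join is the intersection of the
cylinders. Its restriction to `v` is then a tuple of `π_v(R₁ ⋈ ⋯ ⋈ R_k)` satisfying every
branch condition, that is, an element of `δ`. -/

section Cylinder

variable {ι V : Type*}

theorem DBRel.cyl_join [DecidableEq ι] (A B : DBRel ι V) :
    Cyl (A.join B).R = Cyl A.R ∩ Cyl B.R :=
  rfl

theorem mem_cyl_multiJoin [DecidableEq ι] {f : ι → V} (l : List (DBRel ι V)) (A : DBRel ι V) :
    f ∈ Cyl (multiJoin A l).R ↔ ∀ B ∈ A :: l, f ∈ Cyl B.R := by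
  induction l generalizing A with
  | nil => simp [multiJoin]
  | cons B l ih =>
    rw [multiJoin, List.foldl_cons, ← multiJoin, ih]
    simp only [List.forall_mem_cons, A.cyl_join, Set.mem_inter_iff, and_assoc]

theorem restrictVal_mem_proj {X Y : Finset ι} (h : Y ⊆ X) {R : Set (Tuple V X)} {f : ι → V}
    (hf : f ∈ Cyl R) : restrictVal Y f ∈ proj Y h R :=
  ⟨restrictVal X f, hf, rfl⟩

end Cylinder

theorem verifyConflict_sound_general {ι V : Type*} [DecidableEq ι]
    (A : DBRel ι V) (l : List (DBRel ι V)) (v : Finset ι)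
    (hv : v ⊆ (multiJoin A l).X) (𝒞 : Set (Tuple V v → Prop))
    (hδ : sel (fun t => ∀ P ∈ 𝒞, P t) (proj v hv (multiJoin A l).R) = ∅) :
    ¬ ∃ f : ι → V, (∀ B ∈ A :: l, restrictVal B.X f ∈ B.R) ∧
        ∀ P ∈ 𝒞, P (restrictVal v f) := by
  rintro ⟨f, hrels, hconds⟩
  have hf : f ∈ Cyl (multiJoin A l).R := (mem_cyl_multiJoin l A).2 hrels
  have hδf : restrictVal v f ∈ sel (fun t => ∀ P ∈ 𝒞, P t) (proj v hv (multiJoin A l).R) :=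
    ⟨restrictVal_mem_proj hv hf, hconds⟩
  rw [hδ] at hδf
  exact hδf

/-- Soundness of the database-level verification algorithm (Theorem 3): with
`δ = σ_{∀ P ∈ 𝒞, P}( π_v(R₁ ⋈ ⋯ ⋈ R_k) )`, if `δ = ∅` then the ontological conflict is
spurious: no valuation `f : ι → V` satisfies `f|Xⱼ ∈ Rⱼ` for every `j` together with
every relevant branch condition `P ∈ 𝒞` at `f|v`, i.e. no correct instantiation of the
variables reaches the conflicting query from the start state of the protocol. -/
theorem verifyConflict_sound {ι V : Type*} [DecidableEq ι] [Nonempty V]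
    (A : DBRel ι V) (l : List (DBRel ι V)) (v : Finset ι)
    (hv : v ⊆ (multiJoin A l).X) (𝒞 : Set (Tuple V v → Prop))
    (hδ : sel (fun t => ∀ P ∈ 𝒞, P t) (proj v hv (multiJoin A l).R) = ∅) :
    ¬ ∃ f : ι → V, (∀ B ∈ A :: l, restrictVal B.X f ∈ B.R) ∧
        ∀ P ∈ 𝒞, P (restrictVal v f) :=
  verifyConflict_sound_general A l v hv 𝒞 hδ
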